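/- If f : [0,1] → ℝ is continuously differentiable, then for every n > 1 and x ∈ [0,1], |R_n(f;x) − f(x)| ≤ n^{−1/2} ω₁(n^{−1/2}) (x(1−x)(1−min{x,1−x}) + √(x(1−x)(1−min{x,1−x}))), where ω₁ is the modulus of continuity of f′. -/

import Mathlib

/-- Generalized rising factorial with increment `h`: `x^(m,h) = x(x+h)···(x+(m-1)h)`. -/
noncomputable def rfac (x h : ℝ) (m : ℕ) : ℝ := ∏ i ∈ Finset.range m, (x + i * h)

/-- Pólya urn probability `p_{n,k}^{a,b,c}`. -/
noncomputable def polyaProb (a b c : ℝ) (n k : ℕ) : ℝ :=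
  (n.choose k : ℝ) * rfac a c k * rfac b c (n - k) / rfac (a + b) c n

/-- The operator `R_n(f;x)` with `c = -min{x,1-x}/(n-1)`. -/
noncomputable def Rop (n : ℕ) (f : ℝ → ℝ) (x : ℝ) : ℝ :=
  ∑ k ∈ Finset.range (n + 1),
    polyaProb x (1 - x) (-(min x (1 - x)) / ((n : ℝ) - 1)) n k * f ((k : ℝ) / n)

/-- Modulus of continuity of `f` on `[a,b]`. -/
noncomputable def modulus (f : ℝ → ℝ) (a b δ : ℝ) : ℝ :=
  sSup {d : ℝ | ∃ u ∈ Set.Icc a b, ∃ v ∈ Set.Icc a b, |u - v| ≤ δ ∧ d = |f u - f v|}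

/-!
`R_n(f;x)` is the expectation of `f(K/n)` for a Pólya–Eggenberger variable `K` with parameters
`x, 1 - x, c`. For `c = -min{x,1-x}/(n-1)` all weights are nonnegative, `K/n` has mean `x`, and
its variance `x(1-x)(1+nc)/(n(1+c))` is at most `x(1-x)(1-min{x,1-x})/n`. The mean value theorem
and subadditivity of `ω₁` give `|f t - f x - f' x (t - x)| ≤ ω₁(δ) (|t - x| + (t - x)² / δ)`;
averaging this against the weights and applying Cauchy–Schwarz with `δ = n^{-1/2}` gives the bound.
-/

open Finset

lemma rfac_succ' (x h : ℝ) (m : ℕ) : rfac x h (m + 1) = x * rfac (x + h) h m := by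
  rw [rfac, prod_range_succ', Nat.cast_zero, zero_mul, add_zero, mul_comm, rfac]
  exact congrArg (x * ·) (prod_congr rfl fun i _ => by push_cast; ring)

theorem sum_choose_mul_rfac (a b c : ℝ) (n : ℕ) :
    ∑ k ∈ range (n + 1), (n.choose k : ℝ) * rfac a c k * rfac b c (n - k) = rfac (a + b) c n := by
  induction n generalizing a b with
  | zero => simp [rfac]
  | succ n ih =>
    have hsplit := sum_choose_succ_mul (fun i j => rfac a c i * rfac b c j) n
    simp only [← mul_assoc] at hsplit
    have hb : ∑ i ∈ range (n + 1), (n.choose i : ℝ) * rfac a c i * rfac b c (n + 1 - i)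
        = b * rfac (a + b + c) c n := by
      rw [show a + b + c = a + (b + c) by ring, ← ih, mul_sum]
      refine sum_congr rfl fun i hi => ?_
      rw [Nat.sub_add_comm (mem_range_succ_iff.mp hi), rfac_succ']
      ring
    have ha : ∑ i ∈ range (n + 1), (n.choose i : ℝ) * rfac a c (i + 1) * rfac b c (n - i)
        = a * rfac (a + b + c) c n := by
      rw [show a + b + c = a + c + b by ring, ← ih, mul_sum]
      exact sum_congr rfl fun i _ => by rw [rfac_succ']; ring
    rw [hsplit, hb, ha, rfac_succ']
    ring

theorem sum_cast_mul_choose_succ_mul (F : ℕ → ℕ → ℝ) (n : ℕ) :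
    ∑ k ∈ range (n + 2), (k : ℝ) * ((n + 1).choose k : ℝ) * F k (n + 1 - k)
      = (n + 1) * ∑ j ∈ range (n + 1), (n.choose j : ℝ) * F (j + 1) (n - j) := by
  rw [sum_range_succ', mul_sum, Nat.cast_zero, zero_mul, zero_mul, add_zero]
  refine sum_congr rfl fun j _ => ?_
  have habsorb : ((n : ℝ) + 1) * n.choose j = (n + 1).choose (j + 1) * ((j : ℝ) + 1) := by
    exact_mod_cast Nat.add_one_mul_choose_eq n j
  rw [Nat.add_sub_add_right, Nat.cast_succ]
  linear_combination (-F (j + 1) (n - j)) * habsorb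

theorem sum_cast_mul_choose_mul_rfac (a b c : ℝ) (n : ℕ) :
    ∑ k ∈ range (n + 2), (k : ℝ) * ((n + 1).choose k : ℝ) * rfac a c k * rfac b c (n + 1 - k)
      = (n + 1) * a * rfac (a + b + c) c n := by
  have h := sum_cast_mul_choose_succ_mul (fun i j => rfac a c i * rfac b c j) n
  simp only [← mul_assoc] at h
  rw [h, show a + b + c = a + c + b by ring, ← sum_choose_mul_rfac, mul_sum, mul_sum]
  exact sum_congr rfl fun j _ => by rw [rfac_succ']; ring

theorem sum_cast_mul_cast_sub_one_mul_choose_mul_rfac (a b c : ℝ) (n : ℕ) :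
    ∑ k ∈ range (n + 3),
        (k : ℝ) * (k - 1) * ((n + 2).choose k : ℝ) * rfac a c k * rfac b c (n + 2 - k)
      = (n + 2) * (n + 1) * (a * (a + c)) * rfac (a + b + 2 * c) c n := by
  have h₁ := sum_cast_mul_choose_succ_mul
    (fun i j => ((i : ℝ) - 1) * rfac a c i * rfac b c j) (n + 1)
  have h₂ := sum_cast_mul_choose_succ_mul (fun i j => rfac a c (i + 1) * rfac b c j) n
  simp only [Nat.cast_succ, add_sub_cancel_right, add_assoc, Nat.reduceAdd] at h₁ h₂
  calc _ = ∑ k ∈ range (n + 3),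
        (k : ℝ) * ((n + 2).choose k : ℝ) * (((k : ℝ) - 1) * rfac a c k * rfac b c (n + 2 - k)) :=
        sum_congr rfl fun k _ => by ring
    _ = (n + 2) * (n + 1) *
          ∑ j ∈ range (n + 1), (n.choose j : ℝ) * (rfac a c (j + 2) * rfac b c (n - j)) := by
        rw [h₁, mul_assoc ((n : ℝ) + 2), ← h₂, one_add_one_eq_two]
        exact congrArg _ (sum_congr rfl fun j _ => by ring)
    _ = (n + 2) * (n + 1) * (a * (a + c)) * rfac (a + c + c + b) c n := by
        rw [← sum_choose_mul_rfac, mul_sum, mul_sum]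
        exact sum_congr rfl fun j _ => by rw [rfac_succ', rfac_succ']; ring
    _ = _ := by ring_nf

lemma min_le_add_mul {x h s t : ℝ} (ht : 0 ≤ t) (hts : t ≤ s) :
    min x (x + s * h) ≤ x + t * h := by
  rcases le_total 0 h with hh | hh
  · exact (min_le_left _ _).trans (by nlinarith)
  · exact (min_le_right _ _).trans (by nlinarith)

lemma min_le_rfac_factor {x h : ℝ} {n k i : ℕ} (hk : k ≤ n) (hi : i ∈ range k) :
    min x (x + ((n : ℝ) - 1) * h) ≤ x + i * h := by
  have : (i : ℝ) + 1 ≤ n := by exact_mod_cast (mem_range.mp hi).trans_le hk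
  exact min_le_add_mul i.cast_nonneg (by linarith)

lemma rfac_nonneg {x h : ℝ} {n k : ℕ} (hk : k ≤ n) (hx : 0 ≤ x)
    (hx' : 0 ≤ x + ((n : ℝ) - 1) * h) : 0 ≤ rfac x h k :=
  prod_nonneg fun _ hi => (le_min hx hx').trans (min_le_rfac_factor hk hi)

lemma rfac_pos {x h : ℝ} {n : ℕ} (hx : 0 < x) (hx' : 0 < x + ((n : ℝ) - 1) * h) :
    0 < rfac x h n :=
  prod_pos fun _ hi => (lt_min hx hx').trans_le (min_le_rfac_factor le_rfl hi)

section Polya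

variable {a b c : ℝ} {n : ℕ}

lemma polyaProb_nonneg {k : ℕ} (hk : k ≤ n) (ha : 0 ≤ a) (hb : 0 ≤ b)
    (ha' : 0 ≤ a + ((n : ℝ) - 1) * c) (hb' : 0 ≤ b + ((n : ℝ) - 1) * c) :
    0 ≤ polyaProb a b c n k :=
  div_nonneg (mul_nonneg (mul_nonneg (Nat.cast_nonneg _) (rfac_nonneg hk ha ha'))
      (rfac_nonneg (n.sub_le k) hb hb'))
    (rfac_nonneg le_rfl (by linarith) (by linarith))

lemma sum_polyaProb (h : rfac (a + b) c n ≠ 0) :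
    ∑ k ∈ range (n + 1), polyaProb a b c n k = 1 := by
  simp only [polyaProb, ← sum_div, sum_choose_mul_rfac, div_self h]

lemma sum_polyaProb_mul_cast (h : rfac (a + b) c (n + 1) ≠ 0) :
    ∑ k ∈ range (n + 2), polyaProb a b c (n + 1) k * k = (n + 1) * a / (a + b) := by
  rw [rfac_succ', mul_ne_zero_iff] at h
  calc _ = (∑ k ∈ range (n + 2), (k : ℝ) * ((n + 1).choose k : ℝ) * rfac a c k
          * rfac b c (n + 1 - k)) / rfac (a + b) c (n + 1) := by
        rw [sum_div]; exact sum_congr rfl fun k _ => by rw [polyaProb]; ring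
    _ = _ := by
        rw [sum_cast_mul_choose_mul_rfac, rfac_succ']
        field_simp [h.1, h.2]

lemma sum_polyaProb_mul_cast_mul_cast_sub_one (h : rfac (a + b) c (n + 2) ≠ 0) :
    ∑ k ∈ range (n + 3), polyaProb a b c (n + 2) k * (k * (k - 1))
      = (n + 2) * (n + 1) * (a * (a + c)) / ((a + b) * (a + b + c)) := by
  rw [rfac_succ', rfac_succ', mul_ne_zero_iff, mul_ne_zero_iff,
    show a + b + c + c = a + b + 2 * c by ring] at h
  calc _ = (∑ k ∈ range (n + 3), (k : ℝ) * (k - 1) * ((n + 2).choose k : ℝ) * rfac a c k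
          * rfac b c (n + 2 - k)) / rfac (a + b) c (n + 2) := by
        rw [sum_div]; exact sum_congr rfl fun k _ => by rw [polyaProb]; ring
    _ = _ := by
        rw [sum_cast_mul_cast_sub_one_mul_choose_mul_rfac, rfac_succ', rfac_succ',
          show a + b + c + c = a + b + 2 * c by ring]
        field_simp [h.1, h.2.1, h.2.2]

end Polya

section Normalized

variable {x c : ℝ} {n : ℕ}

lemma sum_polyaProb_mul_div (hn : 0 < n) (h : rfac 1 c n ≠ 0) :
    ∑ k ∈ range (n + 1), polyaProb x (1 - x) c n k * ((k : ℝ) / n) = x := by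
  obtain ⟨n, rfl⟩ : ∃ m, n = m + 1 := ⟨n - 1, by omega⟩
  have hmean := sum_polyaProb_mul_cast (a := x) (b := 1 - x) (by rwa [add_sub_cancel])
  rw [add_sub_cancel, div_one] at hmean
  simp only [mul_div_assoc', ← sum_div, hmean]
  push_cast
  field_simp

lemma sum_polyaProb_mul_sq_sub (hn : 1 < n) (h : rfac 1 c n ≠ 0) :
    ∑ k ∈ range (n + 1), polyaProb x (1 - x) c n k * ((k : ℝ) / n - x) ^ 2
      = x * (1 - x) * (1 + n * c) / (n * (1 + c)) := by
  obtain ⟨n, rfl⟩ : ∃ m, n = m + 2 := ⟨n - 2, by omega⟩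
  have h1c : 1 + c ≠ 0 := fun h0 => h (by rw [rfac_succ', rfac_succ', h0]; ring)
  have hD : rfac (x + (1 - x)) c (n + 2) ≠ 0 := by rwa [add_sub_cancel]
  have hmass := sum_polyaProb hD
  have hmean := sum_polyaProb_mul_div (x := x) (by omega) h
  have hfact := sum_polyaProb_mul_cast_mul_cast_sub_one hD
  rw [add_sub_cancel, one_mul, add_comm 1 c, add_comm c 1] at hfact
  set N : ℝ := ((n + 2 : ℕ) : ℝ)
  have hN : N ≠ 0 := by positivity
  calc _ = (∑ k ∈ range (n + 3), polyaProb x (1 - x) c (n + 2) k * (k * (k - 1))) / N ^ 2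
        + (∑ k ∈ range (n + 3), polyaProb x (1 - x) c (n + 2) k * ((k : ℝ) / N)) * (1 / N - 2 * x)
        + (∑ k ∈ range (n + 3), polyaProb x (1 - x) c (n + 2) k) * x ^ 2 := by
        rw [sum_div, sum_mul, sum_mul, ← sum_add_distrib, ← sum_add_distrib]
        exact sum_congr rfl fun k _ => by field_simp; ring
    _ = _ := by
        rw [hmass, hmean, hfact]
        simp only [N]
        push_cast
        field_simp
        ring

end Normalized

section Modulus

variable {g : ℝ → ℝ} {a b δ u v : ℝ}

lemma abs_sub_le_modulus (hg : ContinuousOn g (Set.Icc a b)) (hu : u ∈ Set.Icc a b)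
    (hv : v ∈ Set.Icc a b) (huv : |u - v| ≤ δ) : |g u - g v| ≤ modulus g a b δ := by
  have hbdd : BddAbove ((fun p : ℝ × ℝ => |g p.1 - g p.2|) '' Set.Icc a b ×ˢ Set.Icc a b) :=
    (isCompact_Icc.prod isCompact_Icc).bddAbove_image ((hg.comp continuousOn_fst
      fun _ hp => hp.1).sub (hg.comp continuousOn_snd fun _ hp => hp.2)).abs
  refine le_csSup (hbdd.mono ?_) ⟨u, hu, v, hv, huv, rfl⟩
  rintro _ ⟨u, hu, v, hv, -, rfl⟩
  exact ⟨(u, v), ⟨hu, hv⟩, rfl⟩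

lemma modulus_nonneg (hg : ContinuousOn g (Set.Icc a b)) (hab : a ≤ b) (hδ : 0 ≤ δ) :
    0 ≤ modulus g a b δ :=
  (abs_nonneg _).trans (abs_sub_le_modulus hg (Set.left_mem_Icc.2 hab) (Set.left_mem_Icc.2 hab)
    (by simpa using hδ))

lemma abs_sub_le_nat_mul_modulus (hg : ContinuousOn g (Set.Icc a b)) (N : ℕ)
    (hu : u ∈ Set.Icc a b) (hv : v ∈ Set.Icc a b) (huv : |u - v| ≤ N * δ) :
    |g u - g v| ≤ N * modulus g a b δ := by
  induction N generalizing u with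
  | zero =>
    obtain rfl : u = v := by simpa [sub_eq_zero] using huv
    simp
  | succ N ih =>
    have hN : (0 : ℝ) < N + 1 := by positivity
    set w := v + ((N : ℝ) / (N + 1)) • (u - v)
    have hw : w ∈ Set.Icc a b := (convex_Icc a b).add_smul_sub_mem hv hu
      ⟨by positivity, (div_le_one hN).2 (by linarith)⟩
    have huw : u - w = (u - v) / (N + 1) := by simp only [w, smul_eq_mul]; field_simp; ring
    have hwv : w - v = N * ((u - v) / (N + 1)) := by simp only [w, smul_eq_mul]; ring
    have hstep : |u - v| / (N + 1) ≤ δ := by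
      rw [div_le_iff₀ hN]; push_cast at huv; linarith
    calc |g u - g v| ≤ |g u - g w| + |g w - g v| := abs_sub_le _ _ _
      _ ≤ modulus g a b δ + N * modulus g a b δ := by
        gcongr
        · exact abs_sub_le_modulus hg hu hw (by rwa [huw, abs_div, abs_of_pos hN])
        · refine ih hw ?_
          rw [hwv, abs_mul, Nat.abs_cast, abs_div, abs_of_pos hN]
          gcongr
      _ = (N + 1 : ℕ) * modulus g a b δ := by push_cast; ring

lemma abs_sub_le_one_add_div_mul_modulus (hg : ContinuousOn g (Set.Icc a b)) (hδ : 0 < δ)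
    (hu : u ∈ Set.Icc a b) (hv : v ∈ Set.Icc a b) :
    |g u - g v| ≤ (1 + |u - v| / δ) * modulus g a b δ := by
  have hr : 0 ≤ |u - v| / δ := by positivity
  calc |g u - g v| ≤ ⌈|u - v| / δ⌉₊ * modulus g a b δ :=
        abs_sub_le_nat_mul_modulus hg _ hu hv ((div_le_iff₀ hδ).1 (Nat.le_ceil _))
    _ ≤ _ := mul_le_mul_of_nonneg_right (by linarith [Nat.ceil_lt_add_one hr])
        (modulus_nonneg hg (hu.1.trans hu.2) hδ.le)

end Modulus

section Taylor

variable {f f' : ℝ → ℝ} {a b δ x : ℝ}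

lemma abs_sub_sub_mul_le_modulus (hf : ∀ t ∈ Set.Icc a b, HasDerivAt f (f' t) t)
    (hf' : ContinuousOn f' (Set.Icc a b)) (hδ : 0 < δ) {t : ℝ} (hx : x ∈ Set.Icc a b)
    (ht : t ∈ Set.Icc a b) :
    |f t - f x - f' x * (t - x)| ≤ modulus f' a b δ * (|t - x| + (t - x) ^ 2 / δ) := by
  have hsub : Set.uIcc x t ⊆ Set.Icc a b := Set.uIcc_subset_Icc hx ht
  have hderiv : ∀ y ∈ Set.uIcc x t, HasDerivWithinAt (fun y => f y - f' x * y)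
      (f' y - f' x) (Set.uIcc x t) y := fun y hy => by
    simpa using ((hf y (hsub hy)).fun_sub ((hasDerivAt_id' y).const_mul (f' x))).hasDerivWithinAt
  have hbound : ∀ y ∈ Set.uIcc x t, ‖f' y - f' x‖ ≤ (1 + |t - x| / δ) * modulus f' a b δ :=
    fun y hy => (abs_sub_le_one_add_div_mul_modulus hf' hδ (hsub hy) hx).trans
      (mul_le_mul_of_nonneg_right
        (add_le_add_right (div_le_div_of_nonneg_right (Set.abs_sub_left_of_mem_uIcc hy) hδ.le) 1)
        (modulus_nonneg hf' (hx.1.trans hx.2) hδ.le))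
  have hmvt := Convex.norm_image_sub_le_of_norm_hasDerivWithin_le hderiv hbound (convex_uIcc x t)
    Set.left_mem_uIcc Set.right_mem_uIcc
  rw [Real.norm_eq_abs, Real.norm_eq_abs] at hmvt
  calc |f t - f x - f' x * (t - x)| = |f t - f' x * t - (f x - f' x * x)| := by ring_nf
    _ ≤ (1 + |t - x| / δ) * modulus f' a b δ * |t - x| := hmvt
    _ = _ := by rw [← sq_abs]; ring

theorem abs_sum_mul_sub_le_modulus {ι : Type*} {s : Finset ι} {w t : ι → ℝ} {V : ℝ}
    (hf : ∀ t ∈ Set.Icc a b, HasDerivAt f (f' t) t) (hf' : ContinuousOn f' (Set.Icc a b))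
    (hδ : 0 < δ) (hx : x ∈ Set.Icc a b) (ht : ∀ i ∈ s, t i ∈ Set.Icc a b)
    (hw : ∀ i ∈ s, 0 ≤ w i) (hw₁ : ∑ i ∈ s, w i = 1) (hmean : ∑ i ∈ s, w i * t i = x)
    (hvar : ∑ i ∈ s, w i * (t i - x) ^ 2 ≤ V) :
    |∑ i ∈ s, w i * f (t i) - f x| ≤ modulus f' a b δ * (√V + V / δ) := by
  have hω := modulus_nonneg hf' (hx.1.trans hx.2) hδ.le
  have hremainder : ∑ i ∈ s, w i * f (t i) - f x
      = ∑ i ∈ s, w i * (f (t i) - f x - f' x * (t i - x)) := by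
    simp only [mul_sub, sum_sub_distrib, ← sum_mul, hw₁, mul_left_comm (w _) (f' x),
      ← mul_sum, hmean]
    ring
  have hcauchySchwarz : ∑ i ∈ s, w i * |t i - x| ≤ √(∑ i ∈ s, w i * (t i - x) ^ 2) := by
    refine (le_abs_self _).trans (Real.abs_le_sqrt ?_)
    simpa [hw₁] using sum_sq_le_sum_mul_sum_of_sq_le_mul s hw
      (fun i hi => mul_nonneg (hw i hi) (sq_nonneg (t i - x)))
      (fun i _ => (by rw [mul_pow, sq_abs]; ring : (w i * |t i - x|) ^ 2 = _).le)
  calc |∑ i ∈ s, w i * f (t i) - f x|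
      ≤ ∑ i ∈ s, w i * (modulus f' a b δ * (|t i - x| + (t i - x) ^ 2 / δ)) := by
        rw [hremainder]
        refine (abs_sum_le_sum_abs _ _).trans (sum_le_sum fun i hi => ?_)
        rw [abs_mul, abs_of_nonneg (hw i hi)]
        exact mul_le_mul_of_nonneg_left
          (abs_sub_sub_mul_le_modulus hf hf' hδ hx (ht i hi)) (hw i hi)
    _ = modulus f' a b δ * (∑ i ∈ s, w i * |t i - x| + (∑ i ∈ s, w i * (t i - x) ^ 2) / δ) := by
        rw [sum_div, ← sum_add_distrib, mul_sum]
        exact sum_congr rfl fun i _ => by ring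
    _ ≤ modulus f' a b δ * (√V + V / δ) := by
        gcongr
        exact hcauchySchwarz.trans (Real.sqrt_le_sqrt hvar)

end Taylor

section Rop

variable {x c : ℝ} {n : ℕ}

lemma polyaProb_nonneg_of_mul_eq (hx : x ∈ Set.Icc (0 : ℝ) 1)
    (hc : ((n : ℝ) - 1) * c = -min x (1 - x)) {k : ℕ} (hk : k ≤ n) :
    0 ≤ polyaProb x (1 - x) c n k :=
  polyaProb_nonneg hk hx.1 (by linarith [hx.2]) (by linarith [min_le_left x (1 - x)])
    (by linarith [min_le_right x (1 - x)])

lemma rfac_one_pos_of_mul_eq (hc : ((n : ℝ) - 1) * c = -min x (1 - x)) : 0 < rfac 1 c n :=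
  rfac_pos one_pos (by linarith [min_le_left x (1 - x), min_le_right x (1 - x)])

lemma sum_polyaProb_mul_sq_sub_le (hn : 1 < n) (hx : x ∈ Set.Icc (0 : ℝ) 1)
    (hc : ((n : ℝ) - 1) * c = -min x (1 - x)) :
    ∑ k ∈ range (n + 1), polyaProb x (1 - x) c n k * ((k : ℝ) / n - x) ^ 2
      ≤ x * (1 - x) * (1 - min x (1 - x)) / n := by
  have hn₂ : (2 : ℝ) ≤ n := by exact_mod_cast hn
  have hm₀ : 0 ≤ min x (1 - x) := le_min hx.1 (by linarith [hx.2])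
  have hc₀ : c ≤ 0 := nonpos_of_mul_nonpos_right (by linarith) (by linarith : (0 : ℝ) < n - 1)
  have h1c : 0 < 1 + c := by
    refine pos_of_mul_pos_right (a := (n : ℝ) - 1) ?_ (by linarith)
    rw [mul_one_add, hc]
    linarith [min_le_left x (1 - x), min_le_right x (1 - x)]
  have hx₁x : 0 ≤ x * (1 - x) := mul_nonneg hx.1 (by linarith [hx.2])
  rw [sum_polyaProb_mul_sq_sub hn (rfac_one_pos_of_mul_eq hc).ne',
    div_le_div_iff₀ (by positivity) (by positivity)]
  have hgap : x * (1 - x) * (1 - min x (1 - x)) * (n * (1 + c)) - x * (1 - x) * (1 + n * c) * n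
      = x * (1 - x) * n * (min x (1 - x) * -c) := by
    linear_combination (-(x * (1 - x) * n)) * hc
  linarith [mul_nonneg (mul_nonneg hx₁x (by linarith : (0 : ℝ) ≤ n))
    (mul_nonneg hm₀ (neg_nonneg.2 hc₀))]

end Rop

theorem Rop_deriv_estimate (f f' : ℝ → ℝ)
    (hf : ∀ t ∈ Set.Icc (0 : ℝ) 1, HasDerivAt f (f' t) t)
    (hf' : ContinuousOn f' (Set.Icc (0 : ℝ) 1))
    (n : ℕ) (hn : 1 < n) (x : ℝ) (hx : x ∈ Set.Icc (0 : ℝ) 1) :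
    |Rop n f x - f x| ≤
      (n : ℝ) ^ (-(1 : ℝ) / 2) * modulus f' 0 1 ((n : ℝ) ^ (-(1 : ℝ) / 2)) *
        (x * (1 - x) * (1 - min x (1 - x)) +
          Real.sqrt (x * (1 - x) * (1 - min x (1 - x)))) := by
  have hn₁ : (1 : ℝ) < n := by exact_mod_cast hn
  have hc : ((n : ℝ) - 1) * (-(min x (1 - x)) / ((n : ℝ) - 1)) = -min x (1 - x) :=
    mul_div_cancel₀ _ (by linarith)
  have hD := (rfac_one_pos_of_mul_eq hc).ne'
  have hδ : (n : ℝ) ^ (-(1 : ℝ) / 2) = (√n)⁻¹ := by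
    rw [Real.sqrt_eq_rpow, ← Real.rpow_neg n.cast_nonneg]; norm_num
  have hestimate := abs_sum_mul_sub_le_modulus (s := range (n + 1)) (t := fun k => (k : ℝ) / n)
    (δ := (n : ℝ) ^ (-(1 : ℝ) / 2)) hf hf' (by positivity) hx
    (fun k hk => ⟨by positivity, div_le_one_of_le₀ (by exact_mod_cast mem_range_succ_iff.mp hk)
      n.cast_nonneg⟩)
    (fun k hk => polyaProb_nonneg_of_mul_eq hx hc (mem_range_succ_iff.mp hk))
    (sum_polyaProb (by rwa [add_sub_cancel])) (sum_polyaProb_mul_div (by omega) hD)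
    (sum_polyaProb_mul_sq_sub_le hn hx hc)
  refine hestimate.trans_eq ?_
  have hsqrt : 0 < √(n : ℝ) := by positivity
  rw [hδ, Real.sqrt_div' _ n.cast_nonneg]
  field_simp
  rw [Real.sq_sqrt n.cast_nonneg]
  ring
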